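/- arXiv:1904.04287 — 5 statements merged into one kernel-verified Lean document; each statement's English description precedes it below -/
import Mathlib

section
/- The residual-life survival function of G_λ[F] is itself of the transformed form: (1 − G_λ[F](x+t))/(1 − G_λ[F](t)) = (1 − F_t(x))·(1 − β·F_t(x)), where F_t(x) = (F(x+t) − F(t))/(1 − F(t)) and β = λ(1 − F(t))/(1 − λF(t)), provided F(t) < 1 and 1 − λF(t) ≠ 0. -/
/-- The residual-life survival function of `G_λ[F]` is of the transformed form:
`(1 − G_λ[F](x+t))/(1 − G_λ[F](t)) = (1 − F_t(x))(1 − β F_t(x))` with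
`F_t(x) = (F(x+t) − F(t))/(1 − F(t))` and `β = λ(1 − F(t))/(1 − λF(t))`. -/
theorem transformed_residual_life (F : ℝ → ℝ) (lam : ℝ) (t x : ℝ)
    (hlam : lam ∈ Set.Icc (-1 : ℝ) 1)
    (ht : F t < 1) (ht' : 1 - lam * F t ≠ 0) :
    (1 - F (x + t) * (1 + lam * (1 - F (x + t)))) /
      (1 - F t * (1 + lam * (1 - F t)))
      = (1 - (F (x + t) - F t) / (1 - F t)) *
        (1 - (lam * (1 - F t) / (1 - lam * F t)) * ((F (x + t) - F t) / (1 - F t))) := by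
  have h1 : (1 : ℝ) - F t ≠ 0 := by linarith
  have h2 : 1 - F t * (1 + lam * (1 - F t)) = (1 - F t) * (1 - lam * F t) := by ring
  rw [h2]
  field_simp
  ring
end

section
/- For CDFs F₁, F₂ and λ ∈ [-1,1], the quantile composition satisfies G_λ[F₂]⁻¹(G_λ[F₁](x)) = F₂⁻¹(F₁(x)) for all x; consequently the transformation F ↦ G_λ[F] preserves the convex transform, star, superadditive, and dispersive orders. -/
/-! Since `(1 + λ)² - 4λ·p(1 + λ(1 - p)) = (1 + λ - 2λp)²` and `1 + λ - 2λp ≥ 0` for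
`p ∈ [0, 1]`, `λ ∈ [-1, 1]`, the quantile formula for `G_λ[F₂]` undoes the distortion
`p ↦ p(1 + λ(1 - p))` exactly. Hence `G_λ[F₂]⁻¹ ∘ G_λ[F₁] = F₂⁻¹ ∘ F₁`, and every order
defined through this composition is preserved. -/

open Set

lemma one_add_sub_two_mul_nonneg {lam p : ℝ} (hlam : lam ∈ Icc (-1 : ℝ) 1)
    (hp : p ∈ Icc (0 : ℝ) 1) : 0 ≤ 1 + lam - 2 * lam * p := by
  obtain ⟨hlam₁, hlam₂⟩ := hlam
  obtain ⟨hp₀, hp₁⟩ := hp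
  have h₁ : 0 ≤ (1 - p) * (1 + lam) := mul_nonneg (by linarith) (by linarith)
  have h₂ : 0 ≤ p * (1 - lam) := mul_nonneg hp₀ (by linarith)
  linarith

lemma sqrt_discriminant_transmutation {lam p : ℝ} (hlam : lam ∈ Icc (-1 : ℝ) 1)
    (hp : p ∈ Icc (0 : ℝ) 1) :
    Real.sqrt ((1 + lam) ^ 2 - 4 * lam * (p * (1 + lam * (1 - p)))) = 1 + lam - 2 * lam * p := by
  rw [show (1 + lam) ^ 2 - 4 * lam * (p * (1 + lam * (1 - p))) = (1 + lam - 2 * lam * p) ^ 2 by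
    ring, Real.sqrt_sq (one_add_sub_two_mul_nonneg hlam hp)]

lemma transmutation_quantile_apply {lam p : ℝ} (hlam : lam ∈ Icc (-1 : ℝ) 1) (hlam0 : lam ≠ 0)
    (hp : p ∈ Icc (0 : ℝ) 1) :
    (1 + lam - Real.sqrt ((1 + lam) ^ 2 - 4 * lam * (p * (1 + lam * (1 - p))))) / (2 * lam) = p := by
  rw [sqrt_discriminant_transmutation hlam hp]
  field_simp
  ring

theorem transform_quantile_composition_general (F₁ F₂inv : ℝ → ℝ) (lam : ℝ)
    (hlam : lam ∈ Set.Icc (-1 : ℝ) 1) (hlam0 : lam ≠ 0)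
    (hF₁ : ∀ x, F₁ x ∈ Set.Icc (0 : ℝ) 1)
    (T S : ℝ → ℝ)
    (hT : T = fun x => F₂inv ((1 + lam -
      Real.sqrt ((1 + lam) ^ 2 - 4 * lam * (F₁ x * (1 + lam * (1 - F₁ x))))) / (2 * lam)))
    (hS : S = fun x => F₂inv (F₁ x)) :
    (∀ x, T x = S x) ∧
    (ConvexOn ℝ Set.univ S → ConvexOn ℝ Set.univ T) ∧
    (Monotone (fun x => S x / x) → Monotone (fun x => T x / x)) ∧
    ((∀ x y, S x + S y ≤ S (x + y)) → ∀ x y, T x + T y ≤ T (x + y)) ∧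
    (Monotone (fun x => S x - x) → Monotone (fun x => T x - x)) := by
  have hTS : T = S := by
    subst hT hS
    funext x
    rw [transmutation_quantile_apply hlam hlam0 (hF₁ x)]
  subst hTS
  exact ⟨fun _ => rfl, id, id, id, id⟩

/-- Quantile composition: for strictly increasing continuous CDFs `F₁, F₂` with
inverse `F₂inv` of `F₂`, and `λ ∈ [-1,1]`, `λ ≠ 0`, the quantile transform of
`G_λ[F₂]` composed with `G_λ[F₁]` equals `F₂⁻¹ ∘ F₁`; consequently the map
`F ↦ G_λ[F]` preserves the convex transform, star, superadditive and dispersive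
orders. -/
theorem transform_quantile_composition (F₁ F₂ F₂inv : ℝ → ℝ) (lam : ℝ)
    (hlam : lam ∈ Set.Icc (-1 : ℝ) 1) (hlam0 : lam ≠ 0)
    (hF₁ : ∀ x, F₁ x ∈ Set.Icc (0 : ℝ) 1)
    (hF₂cont : Continuous F₂) (hF₂mono : StrictMono F₂)
    (hinv : ∀ x, F₂inv (F₂ x) = x)
    (T S : ℝ → ℝ)
    (hT : T = fun x => F₂inv ((1 + lam -
      Real.sqrt ((1 + lam) ^ 2 - 4 * lam * (F₁ x * (1 + lam * (1 - F₁ x))))) / (2 * lam)))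
    (hS : S = fun x => F₂inv (F₁ x)) :
    (∀ x, T x = S x) ∧
    (ConvexOn ℝ Set.univ S → ConvexOn ℝ Set.univ T) ∧
    (Monotone (fun x => S x / x) → Monotone (fun x => T x / x)) ∧
    ((∀ x y, S x + S y ≤ S (x + y)) → ∀ x y, T x + T y ≤ T (x + y)) ∧
    (Monotone (fun x => S x - x) → Monotone (fun x => T x - x)) :=
  transform_quantile_composition_general F₁ F₂inv lam hlam hlam0 hF₁ T S hT hS
end

section
/- Let G(x;λ,θ) = (1 − e^{−θx})(1 + λe^{−θx}) for x > 0, θ > 0, λ ∈ [-1,1], with density g(x) = θe^{−θx}(1 + λ(2e^{−θx} − 1)). Then log g(x) is concave in x for λ ∈ [-1,0] and convex in x for λ ∈ [0,1]. -/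
/-!
With `t = -θx` the log-density is `log θ + t + log ((1 - λ) + 2λ eᵗ)`. The map
`t ↦ log (a + b eᵗ)` has second derivative `a b eᵗ / (a + b eᵗ)²`, whose sign is that of
`a b = 2λ(1 - λ)`, i.e. of `λ`; adding the affine part `log θ + t` and substituting the linear
map `x ↦ -θx` preserve convexity and concavity.
-/

open Set Real

section LogAffineExp

variable {a b : ℝ}

theorem hasDerivAt_log_const_add_mul_exp {t : ℝ} (ht : 0 < a + b * exp t) :
    HasDerivAt (fun t => log (a + b * exp t)) (b * exp t / (a + b * exp t)) t :=
  (((hasDerivAt_exp t).const_mul b).const_add a).log ht.ne'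

theorem hasDerivAt_mul_exp_div_const_add_mul_exp {t : ℝ} (ht : 0 < a + b * exp t) :
    HasDerivAt (fun t => b * exp t / (a + b * exp t)) (a * b * exp t / (a + b * exp t) ^ 2) t :=
  (((hasDerivAt_exp t).const_mul b).div (((hasDerivAt_exp t).const_mul b).const_add a)
    ht.ne').congr_deriv (by ring)

variable {S : Set ℝ}

theorem convexOn_log_const_add_mul_exp (hS : Convex ℝ S) (hpos : ∀ t ∈ S, 0 < a + b * exp t)
    (hab : 0 ≤ a * b) : ConvexOn ℝ S (fun t => log (a + b * exp t)) := by
  refine convexOn_of_hasDerivWithinAt2_nonneg hS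
    (fun t ht => (hasDerivAt_log_const_add_mul_exp (hpos t ht)).continuousAt.continuousWithinAt)
    (fun t ht => (hasDerivAt_log_const_add_mul_exp (hpos t (interior_subset ht))).hasDerivWithinAt)
    (fun t ht =>
      (hasDerivAt_mul_exp_div_const_add_mul_exp (hpos t (interior_subset ht))).hasDerivWithinAt)
    (fun t _ => ?_)
  positivity

theorem concaveOn_log_const_add_mul_exp (hS : Convex ℝ S) (hpos : ∀ t ∈ S, 0 < a + b * exp t)
    (hab : a * b ≤ 0) : ConcaveOn ℝ S (fun t => log (a + b * exp t)) := by
  refine concaveOn_of_hasDerivWithinAt2_nonpos hS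
    (fun t ht => (hasDerivAt_log_const_add_mul_exp (hpos t ht)).continuousAt.continuousWithinAt)
    (fun t ht => (hasDerivAt_log_const_add_mul_exp (hpos t (interior_subset ht))).hasDerivWithinAt)
    (fun t ht =>
      (hasDerivAt_mul_exp_div_const_add_mul_exp (hpos t (interior_subset ht))).hasDerivWithinAt)
    (fun t _ => ?_)
  rw [mul_assoc]
  exact div_nonpos_of_nonpos_of_nonneg (by nlinarith [exp_pos t]) (sq_nonneg _)

end LogAffineExp

theorem one_sub_add_two_mul_exp_pos {lam t : ℝ} (hlam : lam ∈ Icc (-1 : ℝ) 1) (ht : t < 0) :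
    0 < (1 - lam) + 2 * lam * exp t := by
  have hexp : exp t < 1 := exp_lt_one_iff.mpr ht
  -- `(1 - λ) + 2λeᵗ = (1 - λ)(1 - eᵗ) + (1 + λ)eᵗ`, a sum of two nonnegative terms
  rcases hlam.1.lt_or_eq with hlt | rfl
  · nlinarith [mul_nonneg (sub_nonneg.mpr hlam.2) (sub_nonneg.mpr hexp.le),
      mul_pos (neg_lt_iff_pos_add'.mp hlt) (exp_pos t)]
  · nlinarith

theorem log_mul_exp_mul_one_add_mul_eq {θ lam t : ℝ} (hθ : 0 < θ)
    (ht : 0 < (1 - lam) + 2 * lam * exp t) :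
    log (θ * exp t * (1 + lam * (2 * exp t - 1))) =
      log θ + t + log ((1 - lam) + 2 * lam * exp t) := by
  rw [show 1 + lam * (2 * exp t - 1) = (1 - lam) + 2 * lam * exp t by ring,
    log_mul (by positivity) ht.ne', log_mul hθ.ne' (exp_pos t).ne', log_exp]

/-- For the transformed exponential density
`g(x) = θe^{−θx}(1 + λ(2e^{−θx} − 1))` on `(0,∞)`, `log g` is concave for
`λ ∈ [-1,0]` and convex for `λ ∈ [0,1]`. -/
theorem transformed_exponential_log_density (θ lam : ℝ) (hθ : 0 < θ)
    (hlam : lam ∈ Set.Icc (-1 : ℝ) 1) :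
    (lam ≤ 0 → ConcaveOn ℝ (Set.Ioi (0 : ℝ))
      (fun x => Real.log (θ * Real.exp (-θ * x) * (1 + lam * (2 * Real.exp (-θ * x) - 1))))) ∧
    (0 ≤ lam → ConvexOn ℝ (Set.Ioi (0 : ℝ))
      (fun x => Real.log (θ * Real.exp (-θ * x) * (1 + lam * (2 * Real.exp (-θ * x) - 1))))) := by
  set φ : ℝ →ₗ[ℝ] ℝ := LinearMap.mulLeft ℝ (-θ)
  have hφ : φ ⁻¹' Iio 0 = Ioi 0 := by
    ext x
    simp [φ, hθ]
  have hpos (t : ℝ) (ht : t ∈ Iio 0) : 0 < (1 - lam) + 2 * lam * exp t :=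
    one_sub_add_two_mul_exp_pos hlam ht
  have heq : EqOn (((id + fun t => log ((1 - lam) + 2 * lam * exp t)) + fun _ => log θ) ∘ φ)
      (fun x => log (θ * exp (-θ * x) * (1 + lam * (2 * exp (-θ * x) - 1)))) (Ioi 0) := by
    intro x hx
    rw [← hφ] at hx
    simp only [Function.comp_apply, Pi.add_apply, id, φ, LinearMap.mulLeft_apply]
    rw [log_mul_exp_mul_one_add_mul_eq hθ (hpos (-θ * x) hx)]
    ring
  refine ⟨fun hlam0 => ?_, fun hlam0 => ?_⟩
  · have hconc := (((concaveOn_id (convex_Iio 0)).add (concaveOn_log_const_add_mul_exp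
      (convex_Iio 0) hpos (by nlinarith [hlam.2]))).add_const (log θ)).comp_linearMap φ
    rw [hφ] at hconc
    exact hconc.congr heq
  · have hconv := (((convexOn_id (convex_Iio 0)).add (convexOn_log_const_add_mul_exp
      (convex_Iio 0) hpos (by nlinarith [hlam.2]))).add_const (log θ)).comp_linearMap φ
    rw [hφ] at hconv
    exact hconv.congr heq
end

section
/- For the transformed exponential distribution with density g(x;λ,θ) = θe^{−θx}(1 + λ(2e^{−θx} − 1)) on (0,∞), the r-th raw moment equals E(X^r) = (1 + λ(2^{−r} − 1))·r!/θ^r for every natural number r ≥ 1. -/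
/-! The density is the mixture `(1 - λ) Exp(θ) + λ Exp(2θ)`, so the `r`-th moment is the same
mixture of the exponential moments `r! / θ^r` and `r! / (2θ)^r`, both Gamma integrals. -/

open MeasureTheory Real Set
open scoped Nat

lemma integral_pow_mul_exp_neg_mul_Ioi {b : ℝ} (hb : 0 < b) (r : ℕ) :
    ∫ x in Ioi (0 : ℝ), x ^ r * exp (-(b * x)) = r ! / b ^ (r + 1) := by
  have h := integral_rpow_mul_exp_neg_mul_Ioi (a := r + 1) (by positivity) hb
  simp_rw [add_sub_cancel_right, rpow_natCast, Gamma_nat_eq_factorial] at h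
  rw [h, ← Nat.cast_succ, rpow_natCast, one_div, inv_pow, inv_mul_eq_div]

lemma integrableOn_pow_mul_exp_neg_mul_Ioi {b : ℝ} (hb : 0 < b) (r : ℕ) :
    IntegrableOn (fun x ↦ x ^ r * exp (-(b * x))) (Ioi 0) :=
  Integrable.of_integral_ne_zero <| by
    rw [integral_pow_mul_exp_neg_mul_Ioi hb r]; positivity

lemma integral_pow_mul_exponentialPDF_Ioi {b : ℝ} (hb : 0 < b) (r : ℕ) :
    ∫ x in Ioi (0 : ℝ), x ^ r * (b * exp (-(b * x))) = r ! / b ^ r := by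
  simp_rw [mul_left_comm _ b, integral_const_mul, integral_pow_mul_exp_neg_mul_Ioi hb r]
  field_simp
  ring

lemma integrableOn_pow_mul_exponentialPDF_Ioi {b : ℝ} (hb : 0 < b) (r : ℕ) :
    IntegrableOn (fun x ↦ x ^ r * (b * exp (-(b * x)))) (Ioi 0) := by
  simp_rw [mul_left_comm _ b]
  exact (integrableOn_pow_mul_exp_neg_mul_Ioi hb r).const_mul b

lemma transformedExponentialPDF_eq_mixture (θ lam x : ℝ) :
    θ * exp (-θ * x) * (1 + lam * (2 * exp (-θ * x) - 1))
      = (1 - lam) * (θ * exp (-(θ * x))) + lam * (2 * θ * exp (-(2 * θ * x))) := by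
  have hsq : exp (-(2 * θ * x)) = exp (-(θ * x)) * exp (-(θ * x)) := by
    rw [← exp_add]; ring_nf
  rw [hsq, neg_mul]
  ring

theorem transformed_exponential_moments_general (θ lam : ℝ) (hθ : 0 < θ) (r : ℕ) :
    ∫ x in Set.Ioi (0 : ℝ),
        x ^ r * (θ * Real.exp (-θ * x) * (1 + lam * (2 * Real.exp (-θ * x) - 1)))
      = (1 + lam * ((2 : ℝ) ^ (-(r : ℝ)) - 1)) * (Nat.factorial r) / θ ^ r := by
  have h2θ : 0 < 2 * θ := by positivity
  simp_rw [transformedExponentialPDF_eq_mixture, mul_add, mul_left_comm _ (1 - lam),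
    mul_left_comm _ lam]
  rw [integral_add ((integrableOn_pow_mul_exponentialPDF_Ioi hθ r).const_mul _)
      ((integrableOn_pow_mul_exponentialPDF_Ioi h2θ r).const_mul _),
    integral_const_mul, integral_const_mul, integral_pow_mul_exponentialPDF_Ioi hθ,
    integral_pow_mul_exponentialPDF_Ioi h2θ, rpow_neg zero_le_two, rpow_natCast, mul_pow]
  field_simp
  ring

/-- For the transformed exponential distribution with density
`g(x) = θe^{−θx}(1 + λ(2e^{−θx} − 1))` on `(0,∞)`, the `r`-th raw moment is
`(1 + λ(2^{−r} − 1)) r! / θ^r`. -/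
theorem transformed_exponential_moments (θ lam : ℝ) (hθ : 0 < θ)
    (hlam : lam ∈ Set.Icc (-1 : ℝ) 1) (r : ℕ) (hr : 1 ≤ r) :
    ∫ x in Set.Ioi (0 : ℝ),
        x ^ r * (θ * Real.exp (-θ * x) * (1 + lam * (2 * Real.exp (-θ * x) - 1)))
      = (1 + lam * ((2 : ℝ) ^ (-(r : ℝ)) - 1)) * (Nat.factorial r) / θ ^ r :=
  transformed_exponential_moments_general θ lam hθ r
end

section
/- For the transformed exponential distribution, the mean residual life m(t) = ∫₀^∞ (1 − G_t(x)) dx, where 1 − G_t(x) = e^{−θx}(1 + β(e^{−θx} − 1)) and β = λe^{−θt}/(1 + λ(e^{−θt} − 1)), equals (1 + λ(e^{−θt}/2 − 1))/(θ(1 + λ(e^{−θt} − 1))), and satisfies lim_{t→∞} m(t) = 1/θ. -/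
open MeasureTheory Filter Topology

/-! The residual survival function is the mixture `(1 - β) e^{-θx} + β e^{-2θx}` of two exponential
survival functions, so its integral is `(1 - β)/θ + β/(2θ) = (1 - β/2)/θ`. As `t → ∞`,
`e^{-θt} → 0` and the closed form tends to its value at `e^{-θt} = 0`, which is `1/θ`. -/

lemma integral_exp_neg_mul_Ioi_zero {a : ℝ} (ha : 0 < a) :
    ∫ x in Set.Ioi (0 : ℝ), Real.exp (-a * x) = 1 / a := by
  rw [integral_exp_mul_Ioi (neg_lt_zero.mpr ha), mul_zero, Real.exp_zero, neg_div_neg_eq]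

lemma integral_exp_neg_mul_mul_one_add_mul_exp_neg_mul_sub_one {θ : ℝ} (hθ : 0 < θ) (β : ℝ) :
    ∫ x in Set.Ioi (0 : ℝ), Real.exp (-θ * x) * (1 + β * (Real.exp (-θ * x) - 1))
      = (1 - β / 2) / θ := by
  have h2θ : 0 < 2 * θ := by positivity
  have hsplit : ∀ x : ℝ, Real.exp (-θ * x) * (1 + β * (Real.exp (-θ * x) - 1))
      = (1 - β) * Real.exp (-θ * x) + β * Real.exp (-(2 * θ) * x) := fun x => by
    rw [show -(2 * θ) * x = -θ * x + -θ * x by ring, Real.exp_add]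
    ring
  simp_rw [hsplit]
  rw [integral_add ((exp_neg_integrableOn_Ioi 0 hθ).const_mul _)
      ((exp_neg_integrableOn_Ioi 0 h2θ).const_mul _),
    integral_const_mul, integral_const_mul, integral_exp_neg_mul_Ioi_zero hθ,
    integral_exp_neg_mul_Ioi_zero h2θ]
  field_simp
  ring

lemma one_add_mul_sub_one_pos {E lam : ℝ} (hE₀ : 0 ≤ E) (hE₁ : E ≤ 1) (hlam : lam < 1) :
    0 < 1 + lam * (E - 1) := by
  rcases le_or_gt 0 lam with hlam₀ | hlam₀
  · nlinarith [mul_nonneg hlam₀ hE₀]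
  · nlinarith [mul_nonneg_of_nonpos_of_nonpos hlam₀.le (sub_nonpos.mpr hE₁)]

lemma tendsto_exp_neg_mul_atTop_zero {θ : ℝ} (hθ : 0 < θ) :
    Tendsto (fun t : ℝ => Real.exp (-θ * t)) atTop (𝓝 0) :=
  Real.tendsto_exp_atBot.comp (tendsto_id.const_mul_atTop_of_neg (neg_lt_zero.mpr hθ))

/-- Mean residual life of the transformed exponential distribution:
`m(t) = ∫₀^∞ e^{−θx}(1 + β(e^{−θx} − 1)) dx` with
`β = λe^{−θt}/(1 + λ(e^{−θt} − 1))` equals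
`(1 + λ(e^{−θt}/2 − 1))/(θ(1 + λ(e^{−θt} − 1)))`, and `m(t) → 1/θ` as `t → ∞`. -/
theorem transformed_exponential_mrl (θ lam : ℝ) (hθ : 0 < θ)
    (hlam : lam ∈ Set.Ioo (-1 : ℝ) 1) :
    (∀ t : ℝ, 0 ≤ t →
      ∫ x in Set.Ioi (0 : ℝ),
          Real.exp (-θ * x) *
            (1 + (lam * Real.exp (-θ * t) / (1 + lam * (Real.exp (-θ * t) - 1))) *
              (Real.exp (-θ * x) - 1))
        = (1 + lam * (Real.exp (-θ * t) / 2 - 1)) /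
            (θ * (1 + lam * (Real.exp (-θ * t) - 1)))) ∧
    Tendsto (fun t : ℝ => (1 + lam * (Real.exp (-θ * t) / 2 - 1)) /
        (θ * (1 + lam * (Real.exp (-θ * t) - 1)))) atTop (𝓝 (1 / θ)) := by
  have hden : ∀ E : ℝ, 0 ≤ E → E ≤ 1 → 0 < 1 + lam * (E - 1) := fun E hE₀ hE₁ =>
    one_add_mul_sub_one_pos hE₀ hE₁ hlam.2
  constructor
  · intro t ht
    have hE₁ : Real.exp (-θ * t) ≤ 1 := Real.exp_le_one_iff.mpr (by nlinarith)
    have hD := (hden _ (Real.exp_pos _).le hE₁).ne'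
    rw [integral_exp_neg_mul_mul_one_add_mul_exp_neg_mul_sub_one hθ]
    generalize Real.exp (-θ * t) = E at hD ⊢
    field_simp
    ring
  · let m : ℝ → ℝ := fun E => (1 + lam * (E / 2 - 1)) / (θ * (1 + lam * (E - 1)))
    have hD₀ := (hden 0 le_rfl zero_le_one).ne'
    have hm : ContinuousAt m 0 := by fun_prop (disch := exact mul_ne_zero hθ.ne' hD₀)
    have hm0 : m 0 = 1 / θ := by
      simp only [m]
      field_simp
      ring
    rw [← hm0]
    exact hm.tendsto.comp (tendsto_exp_neg_mul_atTop_zero hθ)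
end
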